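/- arXiv:1205.6627 — 2 statements merged into one kernel-verified Lean document; each statement's English description precedes it below -/
import Mathlib

section
/- Let Y, Z ⊆ X be subsets such that Adj y z holds for every y ∈ Y and every z ∈ Z. Then for every g in the Lie subalgebra ⟨Y⟩ and every h in the Lie subalgebra ⟨Z⟩ one has ⁅g, h⁆ = 0 in L. -/
noncomputable section

/-- The Lie ideal of relations of the partially commutative Lie algebra:
it is generated by the brackets `⁅x, y⁆` of generators with `G.Adj x y`. -/
def pcIdeal (R : Type*) [CommRing R] {X : Type*} (G : SimpleGraph X) :
    LieIdeal R (FreeLieAlgebra R X) :=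
  LieSubmodule.lieSpan R (FreeLieAlgebra R X)
    {w | ∃ x y : X, G.Adj x y ∧ w = ⁅FreeLieAlgebra.of R x, FreeLieAlgebra.of R y⁆}

/-- The partially commutative Lie algebra `L_R(X; G)`. -/
abbrev PCLieAlgebra (R : Type*) [CommRing R] (X : Type*) (G : SimpleGraph X) :=
  FreeLieAlgebra R X ⧸ pcIdeal R G

/-- The canonical image `ι x` of a generator `x : X` in `L_R(X; G)`. -/
def pcGen (R : Type*) [CommRing R] {X : Type*} (G : SimpleGraph X) (x : X) :
    PCLieAlgebra R X G :=
  LieSubmodule.Quotient.mk (N := pcIdeal R G) (FreeLieAlgebra.of R x)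

/-- The Lie `R`-subalgebra `⟨Y⟩` of `L_R(X; G)` generated by `{ι y : y ∈ Y}`. -/
def genSpan (R : Type*) [CommRing R] {X : Type*} (G : SimpleGraph X) (Y : Set X) :
    LieSubalgebra R (PCLieAlgebra R X G) :=
  LieSubalgebra.lieSpan R (PCLieAlgebra R X G) (pcGen R G '' Y)

/-- The complement graph on a subset `Y ⊆ X`: distinct vertices of `Y` are adjacent
iff they are not adjacent in `G`. -/
def complOn {X : Type*} (G : SimpleGraph X) (Y : Set X) : SimpleGraph Y where
  Adj a b := (a : X) ≠ (b : X) ∧ ¬ G.Adj a b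
  symm := ⟨fun _ _ h => ⟨fun e => h.1 e.symm, fun e => h.2 (G.adj_symm e)⟩⟩
  loopless := ⟨fun _ h => h.1 rfl⟩

/-- The vertex set (as a subset of `X`) of a connected component of the
complement graph on `Y`. -/
def compSet {X : Type*} (G : SimpleGraph X) (Y : Set X)
    (c : (complOn G Y).ConnectedComponent) : Set X :=
  {x : X | ∃ hx : x ∈ Y, (complOn G Y).connectedComponentMk ⟨x, hx⟩ = c}

/-- `Y` is the support of `g`: `g ∈ ⟨Y⟩`, and `Y ⊆ Z` whenever `g ∈ ⟨Z⟩`. -/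
def isSupport (R : Type*) [CommRing R] {X : Type*} (G : SimpleGraph X)
    (g : PCLieAlgebra R X G) (Y : Set X) : Prop :=
  g ∈ genSpan R G Y ∧ ∀ Z : Set X, g ∈ genSpan R G Z → Y ⊆ Z

namespace LieSubalgebra

variable {R L : Type*} [CommRing R] [LieRing L] [LieAlgebra R L]

theorem lie_eq_zero_of_mem_lieSpan_right {a y : L} {t : Set L} (ht : ∀ b ∈ t, ⁅a, b⁆ = 0)
    (hy : y ∈ lieSpan R L t) : ⁅a, y⁆ = 0 := by
  have hEqOn : Set.EqOn (LieDerivation.ad R L a) (0 : LieDerivation R L L) t :=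
    fun b hb => by simpa using ht b hb
  simpa using LieDerivation.eqOn_lieSpan hEqOn hy

theorem lie_eq_zero_of_mem_lieSpan {s t : Set L} (hst : ∀ a ∈ s, ∀ b ∈ t, ⁅a, b⁆ = 0)
    {x y : L} (hx : x ∈ lieSpan R L s) (hy : y ∈ lieSpan R L t) : ⁅x, y⁆ = 0 := by
  have hy_s : ∀ a ∈ s, ⁅y, a⁆ = 0 := fun a ha => by
    rw [← lie_skew, lie_eq_zero_of_mem_lieSpan_right (hst a ha) hy, neg_zero]
  rw [← lie_skew, lie_eq_zero_of_mem_lieSpan_right hy_s hx, neg_zero]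

end LieSubalgebra

theorem pcGen_lie_pcGen_eq_zero {R : Type*} [CommRing R] {X : Type*} {G : SimpleGraph X} {x y : X}
    (hxy : G.Adj x y) : ⁅pcGen R G x, pcGen R G y⁆ = 0 :=
  (LieSubmodule.Quotient.mk_eq_zero' (N := pcIdeal R G)).2 <|
    LieSubmodule.subset_lieSpan ⟨x, y, hxy, rfl⟩

theorem bracket_eq_zero_of_adj_sets_general
    (R : Type*) [CommRing R] (X : Type*) (G : SimpleGraph X)
    (Y Z : Set X) (hYZ : ∀ y ∈ Y, ∀ z ∈ Z, G.Adj y z)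
    (g h : PCLieAlgebra R X G) (hg : g ∈ genSpan R G Y) (hh : h ∈ genSpan R G Z) :
    ⁅g, h⁆ = 0 := by
  refine LieSubalgebra.lie_eq_zero_of_mem_lieSpan ?_ hg hh
  rintro _ ⟨y, hy, rfl⟩ _ ⟨z, hz, rfl⟩
  exact pcGen_lie_pcGen_eq_zero (hYZ y hy z hz)

/-- If every vertex of `Y` is adjacent to every vertex of `Z`, then every element of
the Lie subalgebra `⟨Y⟩` commutes with every element of `⟨Z⟩`. -/
theorem bracket_eq_zero_of_adj_sets
    (R : Type*) [CommRing R] [IsDomain R] (X : Type*) [Fintype X] (G : SimpleGraph X)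
    (Y Z : Set X) (hYZ : ∀ y ∈ Y, ∀ z ∈ Z, G.Adj y z)
    (g h : PCLieAlgebra R X G) (hg : g ∈ genSpan R G Y) (hh : h ∈ genSpan R G Z) :
    ⁅g, h⁆ = 0 :=
  bracket_eq_zero_of_adj_sets_general R X G Y Z hYZ g h hg hh
end
end

section
/- Let y_1, …, y_k be pairwise distinct elements of X, let α_1, …, α_k ∈ R with α_i ≠ 0 for all i, let β_1, …, β_k ∈ R, and set g = Σ_{i=1}^k α_i • ι y_i and h = Σ_{i=1}^k β_i • ι y_i. Suppose ⁅g, h⁆ = 0. If the vertices y_s and y_t are joined by a path in the complement graph on {y_1, …, y_k} (the simple graph on this set in which distinct vertices are adjacent iff they are not adjacent in G), then α_s * β_t = α_t * β_s. -/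
noncomputable section

/-!
If `y i` and `y j` are not adjacent in `G`, sending `ι (y i) ↦ E₀₁`, `ι (y j) ↦ E₁₂` and every
other generator to `0` defines a Lie algebra map from `L` to the Heisenberg algebra of strictly
upper triangular `3 × 3` matrices, because the only non-commuting pair of images is not an edge
of `G`. It sends `⁅g, h⁆` to `(α i * β j - α j * β i) • E₀₂`, so this minor vanishes. Since all
`α i` are nonzero and `R` is a domain, proportionality of the pairs `(α i, β i)` is transitive,
so it propagates along paths of the complement graph.
-/

theorem mul_eq_mul_comm_trans {M : Type*} [CommMonoidWithZero M] [IsLeftCancelMulZero M]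
    {a₁ a₂ a₃ b₁ b₂ b₃ : M}
    (ha₂ : a₂ ≠ 0) (h₁₂ : a₁ * b₂ = a₂ * b₁) (h₂₃ : a₂ * b₃ = a₃ * b₂) :
    a₁ * b₃ = a₃ * b₁ :=
  mul_left_cancel₀ ha₂ <| by
    rw [mul_left_comm, h₂₃, mul_left_comm, h₁₂, mul_left_comm]

section Lift

variable {R : Type*} [CommRing R] {X : Type*} {G : SimpleGraph X}
  {L : Type*} [LieRing L] [LieAlgebra R L]

theorem pcIdeal_le_ker_lift (v : X → L) (hv : ∀ a b, G.Adj a b → ⁅v a, v b⁆ = 0) :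
    pcIdeal R G ≤ (FreeLieAlgebra.lift R v).ker := by
  rw [pcIdeal, LieSubmodule.lieSpan_le]
  rintro _ ⟨a, b, hab, rfl⟩
  simp [hv a b hab]

def pcLift (v : X → L) (hv : ∀ a b, G.Adj a b → ⁅v a, v b⁆ = 0) :
    PCLieAlgebra R X G →ₗ⁅R⁆ L :=
  { (pcIdeal R G : Submodule R (FreeLieAlgebra R X)).liftQ
      (FreeLieAlgebra.lift R v : FreeLieAlgebra R X →ₗ[R] L) (pcIdeal_le_ker_lift v hv) with
    map_lie' := by
      rintro ⟨a⟩ ⟨b⟩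
      exact (FreeLieAlgebra.lift R v).map_lie a b }

@[simp]
theorem pcLift_pcGen (v : X → L) (hv : ∀ a b, G.Adj a b → ⁅v a, v b⁆ = 0) (x : X) :
    pcLift v hv (pcGen R G x) = v x :=
  FreeLieAlgebra.lift_of_apply v x

end Lift

theorem lie_smul_add_smul {R L : Type*} [CommRing R] [LieRing L] [LieAlgebra R L]
    (a b c d : R) (e f : L) :
    ⁅a • e + b • f, c • e + d • f⁆ = (a * d - b * c) • ⁅e, f⁆ := by
  simp only [add_lie, lie_add, smul_lie, lie_smul, lie_self, smul_zero, ← lie_skew f e]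
  module

theorem lie_eq_zero_of_adj_of_supported_on_pair {X L : Type*} [LieRing L] {G : SimpleGraph X}
    {v : X → L} {x x' : X} (hv : ∀ a, a ≠ x → a ≠ x' → v a = 0) (hxx' : ¬ G.Adj x x')
    {a b : X} (hab : G.Adj a b) : ⁅v a, v b⁆ = 0 := by
  by_cases ha : a = x ∨ a = x'
  · by_cases hb : b = x ∨ b = x'
    · exfalso
      rcases ha with rfl | rfl <;> rcases hb with rfl | rfl
      exacts [hab.ne rfl, hxx' hab, hxx' hab.symm, hab.ne rfl]
    · obtain ⟨hbx, hbx'⟩ := not_or.mp hb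
      rw [hv b hbx hbx', lie_zero]
  · obtain ⟨hax, hax'⟩ := not_or.mp ha
    rw [hv a hax hax', zero_lie]

section Heisenberg

attribute [local instance 100] LieRing.ofAssociativeRing

open Matrix

variable {R : Type*} [CommRing R]

theorem lie_single_zero_one_single_one_two :
    ⁅(single 0 1 1 : Matrix (Fin 3) (Fin 3) R), (single 1 2 1 : Matrix (Fin 3) (Fin 3) R)⁆ =
      single 0 2 1 := by
  rw [Ring.lie_def, single_mul_single_same, single_mul_single_of_ne _ _ _ _ (by decide),
    sub_zero, one_mul]

theorem cross_eq_of_not_adj {X : Type*} {G : SimpleGraph X} {ι : Type*} [Fintype ι]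
    {y : ι → X} (hy : Function.Injective y) {α β : ι → R}
    (hgh : ⁅∑ l, α l • pcGen R G (y l), ∑ l, β l • pcGen R G (y l)⁆ = 0)
    {i j : ι} (hadj : ¬ G.Adj (y i) (y j)) :
    α i * β j = α j * β i := by
  classical
  set e : Matrix (Fin 3) (Fin 3) R := single 0 1 1
  set f : Matrix (Fin 3) (Fin 3) R := single 1 2 1
  set v : X → Matrix (Fin 3) (Fin 3) R := Pi.single (y i) e + Pi.single (y j) f with hv_def
  have hv : ∀ a b, G.Adj a b → ⁅v a, v b⁆ = 0 := fun a b hab =>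
    lie_eq_zero_of_adj_of_supported_on_pair
      (fun a hai haj => by simp [hv_def, hai, haj]) hadj hab
  have himage (γ : ι → R) :
      pcLift v hv (∑ l, γ l • pcGen R G (y l)) = γ i • e + γ j • f := by
    simp [hv_def, Pi.single_apply, hy.eq_iff, Finset.sum_add_distrib]
  have h := congrArg (pcLift v hv) hgh
  rw [LieHom.map_lie, himage, himage, lie_smul_add_smul, lie_single_zero_one_single_one_two,
    map_zero] at h
  simpa [sub_eq_zero] using congrFun (congrFun h 0) 2

end Heisenberg

theorem SimpleGraph.Reachable.rel_of_adj {V : Type*} {G : SimpleGraph V} {r : V → V → Prop}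
    (hrefl : ∀ u, r u u) (htrans : ∀ u v w, r u v → r v w → r u w)
    (hadj : ∀ u v, G.Adj u v → r u v) {u v : V} (h : G.Reachable u v) : r u v := by
  rw [SimpleGraph.reachable_iff_reflTransGen] at h
  induction h with
  | refl => exact hrefl u
  | tail _ hvw ih => exact htrans _ _ _ ih (hadj _ _ hvw)

theorem cross_eq_of_reachable_in_complement_general
    (R : Type*) [CommRing R] [IsDomain R] (X : Type*) (G : SimpleGraph X)
    (k : ℕ) (y : Fin k → X) (hy : Function.Injective y)
    (α β : Fin k → R) (hα : ∀ i, α i ≠ 0)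
    (hgh : ⁅∑ i, α i • pcGen R G (y i), ∑ i, β i • pcGen R G (y i)⁆ = 0)
    (s t : Fin k)
    (hpath : (complOn G (Set.range y)).Reachable
        ⟨y s, Set.mem_range_self s⟩ ⟨y t, Set.mem_range_self t⟩) :
    α s * β t = α t * β s := by
  set e := Equiv.ofInjective y hy
  have hcross := hpath.rel_of_adj
    (r := fun u v => α (e.symm u) * β (e.symm v) = α (e.symm v) * β (e.symm u))
    (fun _ => rfl) (fun _ _ _ => mul_eq_mul_comm_trans (hα _))
    (fun u v huv => cross_eq_of_not_adj hy hgh <| by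
      simpa only [e, Equiv.apply_ofInjective_symm] using huv.2)
  simpa only [e, Equiv.ofInjective_symm_apply] using hcross

/-- If two linear combinations `g = Σ αᵢ • ι yᵢ` and `h = Σ βᵢ • ι yᵢ` of pairwise
distinct generators commute (with all `αᵢ ≠ 0`), and `y s`, `y t` are joined by a path
in the complement graph on `{y₁, …, y_k}`, then `α s * β t = α t * β s`. -/
theorem cross_eq_of_reachable_in_complement
    (R : Type*) [CommRing R] [IsDomain R] (X : Type*) [Fintype X] (G : SimpleGraph X)
    (k : ℕ) (y : Fin k → X) (hy : Function.Injective y)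
    (α β : Fin k → R) (hα : ∀ i, α i ≠ 0)
    (hgh : ⁅∑ i, α i • pcGen R G (y i), ∑ i, β i • pcGen R G (y i)⁆ = 0)
    (s t : Fin k)
    (hpath : (complOn G (Set.range y)).Reachable
        ⟨y s, Set.mem_range_self s⟩ ⟨y t, Set.mem_range_self t⟩) :
    α s * β t = α t * β s :=
  cross_eq_of_reachable_in_complement_general R X G k y hy α β hα hgh s t hpath
end
end
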